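/- arXiv:0806.3677 — 2 statements merged into one kernel-verified Lean document; each statement's English description precedes it below -/
import Mathlib

section
/- If μ is a probability measure on ℕ with mean Σ_a a·μ(a) = 1 - D < 1 (D > 0), then the family ν(m) := m^{-1}·μ^{*m}(m-1), m ∈ ℕ*, is a probability measure on ℕ*, i.e. Σ_{m≥1} m^{-1}·μ^{*m}(m-1) = 1. -/
/-! Let `firstPassage μ k n` be the probability that the random walk with steps `a - 1`, `a ∼ μ`,
started at `k`, first hits `0` at time `n`. Splitting at the first time the walk reaches `k - 1`
shows `firstPassage μ k = firstPassage μ 1 ^{*k}`, and the hitting time theorem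
`n · firstPassage μ k n = k · μ^{*n}(n - k)` follows by induction on `n` from
`m · μ^{*(n+1)}(m) = (n + 1) · (aμ * μ^{*n})(m)`, the coefficientwise form of
`X (F ^ (n + 1))' = (n + 1) (X F') F ^ n`. So the series equals `Q := ∑ₙ firstPassage μ 1 n`.
Truncating the first-step decomposition gives `Q ≤ 1` and `∑ₐ μ(a) Q ^ a ≤ Q`, while Bernoulli's
inequality gives `∑ₐ μ(a) Q ^ a ≥ 1 - (1 - Q)(1 - D)`; hence `(1 - Q) D ≤ 0` and `Q = 1`. -/

/-- Convolution of two sequences. -/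
def conv (f g : ℕ → ℝ) (n : ℕ) : ℝ := ∑ k ∈ Finset.range (n + 1), f k * g (n - k)

/-- `convPow f m` is the `m`-th convolution power of `f` (with `convPow f 0 = δ_0`). -/
def convPow (f : ℕ → ℝ) : ℕ → ℕ → ℝ
  | 0, n => if n = 0 then 1 else 0
  | m + 1, n => conv f (convPow f m) n

open Finset hiding mk
open PowerSeries

lemma conv_eq_coeff_mul (f g : ℕ → ℝ) (n : ℕ) :
    conv f g n = coeff n (mk f * mk g) := by
  simp [coeff_mul, Nat.sum_antidiagonal_eq_sum_range_succ_mk, conv]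

lemma mk_convPow (f : ℕ → ℝ) (m : ℕ) : mk (convPow f m) = mk f ^ m := by
  induction m with
  | zero => ext n; simp [convPow, coeff_one]
  | succ m ih => ext n; rw [coeff_mk, pow_succ', ← ih, ← conv_eq_coeff_mul]; rfl

lemma coeff_X_mul_derivative {R : Type*} [CommSemiring R] (G : R⟦X⟧) (m : ℕ) :
    coeff m (X * d⁄dX R G) = m * coeff m G := by
  cases m with
  | zero => simp
  | succ m => rw [coeff_succ_X_mul, coeff_derivative, mul_comm]; push_cast; rfl

lemma natCast_mul_convPow_succ (f : ℕ → ℝ) (n m : ℕ) :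
    m * convPow f (n + 1) m = (n + 1) * conv (fun a => a * f a) (convPow f n) m := by
  have hX : mk (fun a => (a : ℝ) * f a) = X * d⁄dX ℝ (mk f) := by
    ext a; rw [coeff_X_mul_derivative, coeff_mk, coeff_mk]
  rw [conv_eq_coeff_mul, hX, mk_convPow, ← coeff_mk m (convPow f (n + 1)), mk_convPow,
    ← coeff_X_mul_derivative, derivative_pow, Nat.add_sub_cancel]
  have : X * (((n + 1 : ℕ) : ℝ⟦X⟧) * mk f ^ n * d⁄dX ℝ (mk f))
      = (n + 1) • (X * d⁄dX ℝ (mk f) * mk f ^ n) := by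
    rw [nsmul_eq_mul]; ring
  rw [this, map_nsmul, nsmul_eq_mul]
  push_cast; rfl

lemma summable_norm_convPow {f : ℕ → ℝ} (hf : Summable fun n => ‖f n‖) (m : ℕ) :
    Summable fun n => ‖convPow f m n‖ := by
  induction m with
  | zero => exact summable_of_ne_finset_zero (s := {0}) (by simp [convPow])
  | succ m ih => exact summable_norm_sum_mul_range_of_summable_norm hf ih

lemma hasSum_convPow {f : ℕ → ℝ} (hf : Summable fun n => ‖f n‖) (m : ℕ) :
    HasSum (convPow f m) ((∑' n, f n) ^ m) := by
  induction m with
  | zero => simpa [convPow] using hasSum_ite_eq 0 (1 : ℝ)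
  | succ m ih =>
    rw [pow_succ', ← ih.tsum_eq]
    exact hasSum_sum_range_mul_of_summable_norm hf (summable_norm_convPow hf m)

lemma conv_nonneg {f g : ℕ → ℝ} (hf : ∀ n, 0 ≤ f n) (hg : ∀ n, 0 ≤ g n) (n : ℕ) :
    0 ≤ conv f g n :=
  sum_nonneg fun k _ => mul_nonneg (hf k) (hg (n - k))

lemma convPow_nonneg {f : ℕ → ℝ} (hf : ∀ n, 0 ≤ f n) (m n : ℕ) : 0 ≤ convPow f m n := by
  induction m generalizing n with
  | zero => unfold convPow; positivity
  | succ m ih => exact conv_nonneg hf ih n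

lemma sum_range_conv_le {f g : ℕ → ℝ} (hf : ∀ n, 0 ≤ f n) (hg : ∀ n, 0 ≤ g n) (N : ℕ) :
    ∑ n ∈ range N, conv f g n ≤ (∑ n ∈ range N, f n) * ∑ n ∈ range N, g n := by
  have hdisj : (range N : Set ℕ).PairwiseDisjoint antidiagonal := fun x _ y _ hxy =>
    Finset.disjoint_left.2 fun p hx hy =>
      hxy ((mem_antidiagonal.1 hx).symm.trans (mem_antidiagonal.1 hy))
  calc ∑ n ∈ range N, conv f g n
      = ∑ p ∈ (range N).biUnion antidiagonal, f p.1 * g p.2 := by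
        rw [sum_biUnion hdisj]
        exact sum_congr rfl fun n _ =>
          (Nat.sum_antidiagonal_eq_sum_range_succ_mk (fun p => f p.1 * g p.2) n).symm
    _ ≤ ∑ p ∈ range N ×ˢ range N, f p.1 * g p.2 := by
        refine sum_le_sum_of_subset_of_nonneg (fun p hp => ?_)
          fun p _ _ => mul_nonneg (hf _) (hg _)
        simp only [mem_biUnion, mem_range, HasAntidiagonal.mem_antidiagonal] at hp
        simp only [mem_product, mem_range]
        omega
    _ = (∑ n ∈ range N, f n) * ∑ n ∈ range N, g n := by rw [sum_product, sum_mul_sum]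

lemma sum_range_convPow_le {f : ℕ → ℝ} (hf : ∀ n, 0 ≤ f n) (N m : ℕ) :
    ∑ n ∈ range N, convPow f m n ≤ (∑ n ∈ range N, f n) ^ m := by
  induction m with
  | zero =>
    simp only [convPow, sum_ite_eq', mem_range, pow_zero]
    split_ifs <;> norm_num
  | succ m ih =>
    calc ∑ n ∈ range N, convPow f (m + 1) n
        ≤ (∑ n ∈ range N, f n) * ∑ n ∈ range N, convPow f m n :=
          sum_range_conv_le hf (convPow_nonneg hf m) N
      _ ≤ (∑ n ∈ range N, f n) * (∑ n ∈ range N, f n) ^ m :=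
          mul_le_mul_of_nonneg_left ih (sum_nonneg fun n _ => hf n)
      _ = (∑ n ∈ range N, f n) ^ (m + 1) := (pow_succ' _ _).symm

/-- First-step recursion for the first hitting time of `0` (equivalently, the total progeny of a
Galton–Watson forest with `k` roots). Summing over `a < n + 2` loses nothing, since the walk cannot
get down from above `n` in `n` steps. -/
def firstPassage (f : ℕ → ℝ) : ℕ → ℕ → ℝ
  | k, 0 => if k = 0 then 1 else 0
  | k, n + 1 => if k = 0 then 0 else ∑ a ∈ range (n + 2), f a * firstPassage f (k - 1 + a) n

namespace firstPassage

variable (f : ℕ → ℝ)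

lemma zero_left (n : ℕ) : firstPassage f 0 n = if n = 0 then 1 else 0 := by
  cases n <;> simp [firstPassage]

lemma eq_zero_of_lt {k n : ℕ} (h : n < k) : firstPassage f k n = 0 := by
  induction n generalizing k with
  | zero => simp [firstPassage, Nat.pos_iff_ne_zero.1 h]
  | succ n ih =>
    rw [firstPassage, if_neg (by omega)]
    exact sum_eq_zero fun a _ => by rw [ih (by omega), mul_zero]

lemma succ_eq_sum_range {k n A : ℕ} (hk : k ≠ 0) (hA : n + 2 ≤ A + k) :
    firstPassage f k (n + 1) = ∑ a ∈ range A, f a * firstPassage f (k - 1 + a) n := by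
  have htail : ∀ B, n + 2 - k ≤ B →
      ∑ a ∈ range B, f a * firstPassage f (k - 1 + a) n
        = ∑ a ∈ range (n + 2 - k), f a * firstPassage f (k - 1 + a) n := fun B hB => by
    rw [← sum_range_add_sum_Ico _ hB, add_eq_left]
    exact sum_eq_zero fun a ha => by
      rw [eq_zero_of_lt f (by rw [mem_Ico] at ha; omega), mul_zero]
  rw [firstPassage, if_neg hk, htail (n + 2) (by omega), htail A (by omega)]

lemma one_succ_eq_sum_range {n A : ℕ} (hA : n + 2 ≤ A) :
    firstPassage f 1 (n + 1) = ∑ a ∈ range A, f a * firstPassage f a n := by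
  simp [succ_eq_sum_range f one_ne_zero (by omega : n + 2 ≤ A + 1)]

variable {f} in
lemma nonneg (hf : ∀ a, 0 ≤ f a) (k n : ℕ) : 0 ≤ firstPassage f k n := by
  induction n generalizing k with
  | zero => unfold firstPassage; positivity
  | succ n ih =>
    unfold firstPassage
    split_ifs
    · rfl
    · exact sum_nonneg fun a _ => mul_nonneg (hf a) (ih _)

lemma add (k l n : ℕ) :
    firstPassage f (k + l) n = conv (firstPassage f k) (firstPassage f l) n := by
  induction n generalizing k with
  | zero => by_cases hk : k = 0 <;> by_cases hl : l = 0 <;> simp [firstPassage, conv, hk, hl]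
  | succ n ih =>
    rcases k with _ | k
    · simp [conv, zero_left]
    · calc firstPassage f (k + 1 + l) (n + 1)
          = ∑ a ∈ range (n + 2), f a * conv (firstPassage f (k + a)) (firstPassage f l) n := by
            rw [succ_eq_sum_range f (by omega) le_self_add]
            refine sum_congr rfl fun a _ => ?_
            rw [← ih, show k + 1 + l - 1 + a = k + a + l by omega]
        _ = ∑ j ∈ range (n + 1), (∑ a ∈ range (n + 2), f a * firstPassage f (k + a) j)
              * firstPassage f l (n - j) := by
            simp only [conv, mul_sum, sum_mul, mul_assoc]
            exact sum_comm
        _ = ∑ j ∈ range (n + 1), firstPassage f (k + 1) (j + 1) * firstPassage f l (n - j) := by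
            refine sum_congr rfl fun j hj => ?_
            rw [succ_eq_sum_range f (A := n + 2) (by omega) (by rw [mem_range] at hj; omega)]
            simp only [add_tsub_cancel_right]
        _ = conv (firstPassage f (k + 1)) (firstPassage f l) (n + 1) := by
            simp [conv, sum_range_succ', firstPassage]

lemma eq_convPow (k : ℕ) : firstPassage f k = convPow (firstPassage f 1) k := by
  induction k with
  | zero => funext n; simp [zero_left, convPow]
  | succ k ih =>
    funext n
    show _ = conv _ (convPow _ k) n
    rw [← ih, ← add, add_comm]

lemma natCast_mul {k n : ℕ} (hk : k ≤ n) :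
    n * firstPassage f k n = k * convPow f n (n - k) := by
  induction n generalizing k with
  | zero => simp [Nat.le_zero.1 hk]
  | succ n ih =>
    rcases k with _ | k
    · simp [zero_left]
    rcases Nat.eq_zero_or_pos n with rfl | hn
    · obtain rfl : k = 0 := by omega
      simp [firstPassage, convPow, conv]
    set m := n - k with hm
    set P := convPow f (n + 1) m
    set C := conv (fun a => a * f a) (convPow f n) m
    have hB : n * firstPassage f (k + 1) (n + 1) = k * P + C := by
      rw [succ_eq_sum_range f (A := m + 1) k.succ_ne_zero (by omega), mul_sum]
      calc ∑ a ∈ range (m + 1), (n : ℝ) * (f a * firstPassage f (k + 1 - 1 + a) n)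
          = ∑ a ∈ range (m + 1), (k * (f a * convPow f n (m - a))
              + a * f a * convPow f n (m - a)) := by
            refine sum_congr rfl fun a ha => ?_
            rw [mem_range] at ha
            rw [mul_left_comm, Nat.add_sub_cancel, ih (by omega),
              show n - (k + a) = m - a by omega]
            push_cast; ring
        _ = k * P + C := by rw [sum_add_distrib, ← mul_sum]; rfl
    have hkey : m * P = (n + 1) * C := natCast_mul_convPow_succ f n m
    have hmn : (m : ℝ) = n - k := by rw [hm, Nat.cast_sub (by omega)]
    have hn0 : (n : ℝ) ≠ 0 := by positivity
    apply mul_left_cancel₀ hn0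
    rw [show n + 1 - (k + 1) = m by omega]
    push_cast
    linear_combination (n + 1 : ℝ) * hB - hkey + P * hmn

end firstPassage

section SubProbability

variable {μ : ℕ → ℝ}

lemma sum_range_firstPassage_one_le_one (hnn : ∀ a, 0 ≤ μ a) (hsum : Summable μ)
    (hle : ∑' a, μ a ≤ 1) (N : ℕ) : ∑ n ∈ range N, firstPassage μ 1 n ≤ 1 := by
  induction N with
  | zero => simp
  | succ N ih =>
    set S := ∑ n ∈ range N, firstPassage μ 1 n
    have hS : 0 ≤ S := sum_nonneg fun n _ => firstPassage.nonneg hnn 1 n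
    calc ∑ n ∈ range (N + 1), firstPassage μ 1 n
        = ∑ n ∈ range N, ∑ a ∈ range (N + 1), μ a * firstPassage μ a n := by
          rw [sum_range_succ', firstPassage, if_neg one_ne_zero, add_zero]
          refine sum_congr rfl fun n hn => ?_
          exact firstPassage.one_succ_eq_sum_range μ (by rw [mem_range] at hn; omega)
      _ = ∑ a ∈ range (N + 1), μ a * ∑ n ∈ range N, firstPassage μ a n := by
          rw [sum_comm]; simp only [mul_sum]
      _ ≤ ∑ a ∈ range (N + 1), μ a * S ^ a := by
          refine sum_le_sum fun a _ => mul_le_mul_of_nonneg_left ?_ (hnn a)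
          rw [firstPassage.eq_convPow]
          exact sum_range_convPow_le (firstPassage.nonneg hnn 1) N a
      _ ≤ ∑ a ∈ range (N + 1), μ a :=
          sum_le_sum fun a _ => mul_le_of_le_one_right (hnn a) (pow_le_one₀ hS ih)
      _ ≤ 1 := (hsum.sum_le_tsum _ fun a _ => hnn a).trans hle

lemma summable_firstPassage_one (hnn : ∀ a, 0 ≤ μ a) (hsum : Summable μ)
    (hle : ∑' a, μ a ≤ 1) : Summable (firstPassage μ 1) :=
  summable_of_sum_range_le (firstPassage.nonneg hnn 1)
    (sum_range_firstPassage_one_le_one hnn hsum hle)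

lemma tsum_firstPassage_one_le_one (hnn : ∀ a, 0 ≤ μ a) (hsum : Summable μ)
    (hle : ∑' a, μ a ≤ 1) : ∑' n, firstPassage μ 1 n ≤ 1 :=
  Real.tsum_le_of_sum_range_le (firstPassage.nonneg hnn 1)
    (sum_range_firstPassage_one_le_one hnn hsum hle)

lemma hasSum_firstPassage (hnn : ∀ a, 0 ≤ μ a) (hsum : Summable μ) (hle : ∑' a, μ a ≤ 1)
    (k : ℕ) : HasSum (firstPassage μ k) ((∑' n, firstPassage μ 1 n) ^ k) := by
  rw [firstPassage.eq_convPow]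
  exact hasSum_convPow (summable_firstPassage_one hnn hsum hle).abs k

lemma hasSum_firstPassage_one_succ (hnn : ∀ a, 0 ≤ μ a) (hsum : Summable μ)
    (hle : ∑' a, μ a ≤ 1) :
    HasSum (fun n => firstPassage μ 1 (n + 1)) (∑' n, firstPassage μ 1 n) := by
  simpa [firstPassage] using (hasSum_nat_add_iff' 1).2 (hasSum_firstPassage hnn hsum hle 1)

lemma tsum_mul_pow_tsum_firstPassage_one_le (hnn : ∀ a, 0 ≤ μ a) (hsum : Summable μ)
    (hle : ∑' a, μ a ≤ 1) :
    ∑' a, μ a * (∑' n, firstPassage μ 1 n) ^ a ≤ ∑' n, firstPassage μ 1 n := by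
  set Q := ∑' n, firstPassage μ 1 n
  have hQ0 : 0 ≤ Q := tsum_nonneg (firstPassage.nonneg hnn 1)
  have hQ1 : Q ≤ 1 := tsum_firstPassage_one_le_one hnn hsum hle
  refine Summable.tsum_le_of_sum_range_le (hsum.of_nonneg_of_le
    (fun a => mul_nonneg (hnn a) (pow_nonneg hQ0 a))
    fun a => mul_le_of_le_one_right (hnn a) (pow_le_one₀ hQ0 hQ1)) fun A => ?_
  refine hasSum_le (fun n => ?_)
    (hasSum_sum fun a _ => (hasSum_firstPassage hnn hsum hle a).mul_left (μ a))
    (hasSum_firstPassage_one_succ hnn hsum hle)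
  rw [firstPassage.one_succ_eq_sum_range μ (A := A + n + 2) (by omega)]
  exact sum_le_sum_of_subset_of_nonneg (range_subset_range.2 (by omega))
    fun a _ _ => mul_nonneg (hnn a) (firstPassage.nonneg hnn a n)

end SubProbability

lemma eq_one_of_tsum_mul_pow_le {μ : ℕ → ℝ} {D Q : ℝ} (hD : 0 < D) (hnn : ∀ a, 0 ≤ μ a)
    (hsum : Summable μ) (hprob : ∑' a, μ a = 1) (hsummean : Summable fun a : ℕ => (a : ℝ) * μ a)
    (hmean : ∑' a : ℕ, (a : ℝ) * μ a = 1 - D) (hQ0 : 0 ≤ Q) (hQ1 : Q ≤ 1)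
    (hfix : ∑' a, μ a * Q ^ a ≤ Q) : Q = 1 := by
  have hbernoulli : ∀ a : ℕ, μ a - (1 - Q) * (a * μ a) ≤ μ a * Q ^ a := fun a => by
    have := mul_le_mul_of_nonneg_left (one_add_mul_le_pow (by linarith : (-2 : ℝ) ≤ Q - 1) a)
      (hnn a)
    rw [add_sub_cancel] at this
    linarith
  have hsummable : Summable fun a => μ a * Q ^ a := hsum.of_nonneg_of_le
    (fun a => mul_nonneg (hnn a) (pow_nonneg hQ0 a))
    fun a => mul_le_of_le_one_right (hnn a) (pow_le_one₀ hQ0 hQ1)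
  have hlower : 1 - (1 - Q) * (1 - D) ≤ ∑' a, μ a * Q ^ a := by
    have := (hsum.sub (hsummean.mul_left (1 - Q))).tsum_le_tsum hbernoulli hsummable
    rwa [hsum.tsum_sub (hsummean.mul_left (1 - Q)), tsum_mul_left, hprob, hmean] at this
  nlinarith

theorem stmt_9 (D : ℝ) (hD : 0 < D)
    (μ : ℕ → ℝ) (hnn : ∀ a, 0 ≤ μ a) (hprob : ∑' a : ℕ, μ a = 1)
    (hsummean : Summable fun a : ℕ => (a : ℝ) * μ a)
    (hmean : ∑' a : ℕ, (a : ℝ) * μ a = 1 - D) :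
    ∑' m : ℕ, ((m : ℝ) + 1)⁻¹ * convPow μ (m + 1) m = 1 := by
  have hsum : Summable μ := by
    by_contra h
    simp [tsum_eq_zero_of_not_summable h] at hprob
  have hle : ∑' a, μ a ≤ 1 := hprob.le
  have hdwass : ∀ m : ℕ, ((m : ℝ) + 1)⁻¹ * convPow μ (m + 1) m = firstPassage μ 1 (m + 1) :=
    fun m => by
      have := firstPassage.natCast_mul μ (Nat.le_add_left 1 m)
      rw [Nat.add_sub_cancel, Nat.cast_one, one_mul, Nat.cast_succ] at this
      rw [← this, inv_mul_cancel_left₀ (by positivity)]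
  rw [tsum_congr hdwass, (hasSum_firstPassage_one_succ hnn hsum hle).tsum_eq]
  exact eq_one_of_tsum_mul_pow_le hD hnn hsum hprob hsummean hmean
    (tsum_nonneg (firstPassage.nonneg hnn 1)) (tsum_firstPassage_one_le_one hnn hsum hle)
    (tsum_mul_pow_tsum_firstPassage_one_le hnn hsum hle)
end

section
/- If ν is a probability measure on ℕ with ν(0) > 0, then for the solution u of u(x) = x·φ(u(x)) (φ the generating function of ν), the m-th coefficient of u² is (2/m)·ν^{*m}(m-2); equivalently, Σ_{m'=1}^{m-1} (1/m')ν^{*m'}(m'-1)·(1/(m-m'))ν^{*(m-m')}(m-m'-1) = (2/m)·ν^{*m}(m-2) for every m ≥ 2. -/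
namespace PowerSeries

section CommSemiring

variable {R : Type*} [CommSemiring R]

theorem coeff_pow_succ_eq_sum_range (φ : R⟦X⟧) (m d : ℕ) :
    coeff d (φ ^ (m + 1)) = ∑ j ∈ Finset.range (d + 1), coeff j φ * coeff (d - j) (φ ^ m) := by
  rw [pow_succ', coeff_mul,
    Finset.Nat.sum_antidiagonal_eq_sum_range_succ (fun i j => coeff i φ * coeff j (φ ^ m))]

theorem coeff_X_mul_derivative (f : R⟦X⟧) (n : ℕ) :
    coeff n (X * d⁄dX R f) = n * coeff n f := by
  cases n with
  | zero => simp
  | succ n => rw [coeff_succ_X_mul, coeff_derivative, mul_comm]; push_cast; rfl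

theorem natCast_mul_coeff_pow_succ (φ : R⟦X⟧) (m d : ℕ) :
    d * coeff d (φ ^ (m + 1)) =
      (m + 1) * ∑ j ∈ Finset.range (d + 1), j * coeff j φ * coeff (d - j) (φ ^ m) := by
  have hD : X * d⁄dX R (φ ^ (m + 1)) = C ((m : R) + 1) * ((X * d⁄dX R φ) * φ ^ m) := by
    rw [derivative_pow, map_add, map_natCast, map_one]; push_cast; ring
  rw [← coeff_X_mul_derivative, hD, coeff_C_mul, coeff_mul,
    Finset.Nat.sum_antidiagonal_eq_sum_range_succ
      (fun i j => coeff i (X * d⁄dX R φ) * coeff j (φ ^ m))]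
  simp only [coeff_X_mul_derivative]

theorem coeff_sq_eq_sum_Ico {f : R⟦X⟧} (hf : constantCoeff f = 0) (m : ℕ) :
    coeff m (f ^ 2) = ∑ k ∈ Finset.Ico 1 m, coeff k f * coeff (m - k) f := by
  rw [sq, coeff_mul,
    Finset.Nat.sum_antidiagonal_eq_sum_range_succ (fun i j => coeff i f * coeff j f)]
  refine (Finset.sum_subset (fun k hk => ?_) fun k hk hk' => ?_).symm
  · simp only [Finset.mem_Ico, Finset.mem_range] at hk ⊢; omega
  · simp only [Finset.mem_Ico, Finset.mem_range] at hk hk'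
    rcases Nat.eq_zero_or_pos k with rfl | hk0
    · simp [hf]
    · simp [show m - k = 0 by omega, hf]

end CommSemiring

variable {K : Type*} [Field K]

noncomputable def lagrangeCoeff (φ : K⟦X⟧) (r m : ℕ) : K :=
  if m = 0 then if r = 0 then 1 else 0
  else if r ≤ m then r / m * coeff (m - r) (φ ^ m) else 0

theorem lagrangeCoeff_of_lt (φ : K⟦X⟧) {r m : ℕ} (h : m < r) : lagrangeCoeff φ r m = 0 := by
  unfold lagrangeCoeff
  split_ifs <;> first | rfl | omega

theorem lagrangeCoeff_of_le (φ : K⟦X⟧) {r m : ℕ} (hm : m ≠ 0) (h : r ≤ m) :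
    lagrangeCoeff φ r m = r / m * coeff (m - r) (φ ^ m) := by
  rw [lagrangeCoeff, if_neg hm, if_pos h]

noncomputable def lagrangeSeries (φ : K⟦X⟧) : K⟦X⟧ := mk (lagrangeCoeff φ 1)

theorem coeff_lagrangeSeries (φ : K⟦X⟧) (k : ℕ) :
    coeff k (lagrangeSeries φ) = (k : K)⁻¹ * coeff (k - 1) (φ ^ k) := by
  rcases Nat.eq_zero_or_pos k with rfl | hk
  · simp [lagrangeSeries, lagrangeCoeff]
  · rw [lagrangeSeries, coeff_mk, lagrangeCoeff_of_le φ hk.ne' hk, Nat.cast_one, one_div]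

theorem constantCoeff_lagrangeSeries (φ : K⟦X⟧) : constantCoeff (lagrangeSeries φ) = 0 := by
  simp [← coeff_zero_eq_constantCoeff_apply, coeff_lagrangeSeries]

variable [CharZero K]

theorem lagrangeCoeff_succ_succ (φ : K⟦X⟧) (s : ℕ) {n L : ℕ} (hL : n < L) :
    lagrangeCoeff φ (s + 1) (n + 1) =
      ∑ j ∈ Finset.range L, coeff j φ * lagrangeCoeff φ (s + j) n := by
  rcases Nat.eq_zero_or_pos n with rfl | hn
  · rw [Finset.sum_eq_single_of_mem 0 (Finset.mem_range.2 hL) fun j _ hj => by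
      rw [lagrangeCoeff_of_lt φ (by omega), mul_zero]]
    rcases s with _ | s <;> simp [lagrangeCoeff]
  rcases Nat.lt_or_ge n s with hns | hsn
  · rw [lagrangeCoeff_of_lt φ (by omega)]
    exact (Finset.sum_eq_zero fun j _ => by rw [lagrangeCoeff_of_lt φ (by omega), mul_zero]).symm
  set d := n - s with hd
  have hsum : ∑ j ∈ Finset.range L, coeff j φ * lagrangeCoeff φ (s + j) n =
      (s * ∑ j ∈ Finset.range (d + 1), coeff j φ * coeff (d - j) (φ ^ n) +
        ∑ j ∈ Finset.range (d + 1), j * coeff j φ * coeff (d - j) (φ ^ n)) / n := by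
    rw [← Finset.sum_subset (Finset.range_subset_range.2 (by omega : d + 1 ≤ L))
      fun j _ hj => by
        rw [lagrangeCoeff_of_lt φ (by simp only [Finset.mem_range] at hj; omega), mul_zero],
      Finset.mul_sum, ← Finset.sum_add_distrib, Finset.sum_div]
    refine Finset.sum_congr rfl fun j hj => ?_
    rw [Finset.mem_range] at hj
    rw [lagrangeCoeff_of_le φ hn.ne' (by omega), show n - (s + j) = d - j by omega]
    push_cast
    ring
  have hdK : (d : K) = n - s := by rw [hd, Nat.cast_sub hsn]
  have hderiv := natCast_mul_coeff_pow_succ φ n d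
  rw [hsum, ← coeff_pow_succ_eq_sum_range, lagrangeCoeff_of_le φ n.succ_ne_zero (by omega),
    show n + 1 - (s + 1) = d by omega]
  rw [hdK] at hderiv
  -- the cancellation is `(n + 1) s + (n - s) = n (s + 1)`
  have hn' : (n : K) ≠ 0 := by exact_mod_cast hn.ne'
  field_simp
  push_cast
  linear_combination hderiv

theorem X_pow_dvd_lagrangeSeries_sub (φ : K⟦X⟧) (N : ℕ)
    (ih : ∀ k ≤ N, ∀ r, coeff k (lagrangeSeries φ ^ r) = lagrangeCoeff φ r k) :
    X ^ (N + 2) ∣ lagrangeSeries φ -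
      X * ∑ j ∈ Finset.range (N + 2), C (coeff j φ) * lagrangeSeries φ ^ j := by
  refine X_pow_dvd_iff.2 fun k hk => ?_
  rcases k with _ | k
  · simp [coeff_zero_eq_constantCoeff_apply, constantCoeff_lagrangeSeries]
  · rw [map_sub, coeff_succ_X_mul, map_sum, lagrangeSeries, coeff_mk, sub_eq_zero]
    refine (lagrangeCoeff_succ_succ φ 0 (by omega : k < N + 2)).trans
      (Finset.sum_congr rfl fun j _ => ?_)
    rw [coeff_C_mul, zero_add, ← ih k (by omega) j, lagrangeSeries]

theorem coeff_lagrangeSeries_pow (φ : K⟦X⟧) (r m : ℕ) :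
    coeff m (lagrangeSeries φ ^ r) = lagrangeCoeff φ r m := by
  induction m using Nat.strong_induction_on generalizing r with
  | _ m ih =>
  rcases m with _ | N
  · simp [coeff_zero_eq_constantCoeff_apply, constantCoeff_lagrangeSeries, lagrangeCoeff,
      zero_pow_eq]
  rcases r with _ | s
  · simp [lagrangeCoeff, coeff_one]
  set U := lagrangeSeries φ
  set Φ := ∑ j ∈ Finset.range (N + 2), C (coeff j φ) * U ^ j
  have hdvd : X ^ (N + 2) ∣ U ^ (s + 1) - X * (U ^ s * Φ) := by
    have := X_pow_dvd_lagrangeSeries_sub φ N fun k hk => ih k (by omega)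
    rw [show U ^ (s + 1) - X * (U ^ s * Φ) = U ^ s * (U - X * Φ) by ring]
    exact Dvd.dvd.mul_left this _
  have hcoeff : coeff (N + 1) (U ^ (s + 1)) = coeff (N + 1) (X * (U ^ s * Φ)) :=
    sub_eq_zero.1 <| by rw [← map_sub]; exact X_pow_dvd_iff.1 hdvd (N + 1) (by omega)
  rw [hcoeff, coeff_succ_X_mul,
    Finset.mul_sum, map_sum, lagrangeCoeff_succ_succ φ s (by omega : N < N + 2)]
  refine Finset.sum_congr rfl fun j _ => ?_
  rw [mul_left_comm, ← pow_add, coeff_C_mul, ih N (by omega)]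

end PowerSeries

open PowerSeries

theorem convPow_eq_coeff_pow (f : ℕ → ℝ) (m n : ℕ) : convPow f m n = coeff n (mk f ^ m) := by
  induction m generalizing n with
  | zero => simp [convPow, coeff_one]
  | succ m ih => simp only [convPow, conv, ih, coeff_pow_succ_eq_sum_range, coeff_mk]

theorem stmt_17_general (ν : ℕ → ℝ) :
    ∀ m : ℕ, 2 ≤ m →
      ∑ m' ∈ Finset.Ico 1 m,
          ((m' : ℝ)⁻¹ * convPow ν m' (m' - 1)) *
            (((m : ℝ) - (m' : ℝ))⁻¹ * convPow ν (m - m') (m - m' - 1)) =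
        (2 / (m : ℝ)) * convPow ν m (m - 2) := by
  intro m hm
  have h := coeff_lagrangeSeries_pow (mk ν) 2 m
  rw [coeff_sq_eq_sum_Ico (constantCoeff_lagrangeSeries _),
    lagrangeCoeff_of_le _ (by omega) hm, Nat.cast_ofNat] at h
  rw [convPow_eq_coeff_pow, ← h]
  refine Finset.sum_congr rfl fun k hk => ?_
  rw [Finset.mem_Ico] at hk
  rw [coeff_lagrangeSeries, coeff_lagrangeSeries, Nat.cast_sub hk.2.le,
    convPow_eq_coeff_pow, convPow_eq_coeff_pow]

theorem stmt_17 (ν : ℕ → ℝ) (hnn : ∀ a, 0 ≤ ν a) (hprob : ∑' a : ℕ, ν a = 1)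
    (hν0 : 0 < ν 0) :
    ∀ m : ℕ, 2 ≤ m →
      ∑ m' ∈ Finset.Ico 1 m,
          ((m' : ℝ)⁻¹ * convPow ν m' (m' - 1)) *
            (((m : ℝ) - (m' : ℝ))⁻¹ * convPow ν (m - m') (m - m' - 1)) =
        (2 / (m : ℝ)) * convPow ν m (m - 2) :=
  stmt_17_general ν
end
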